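/- arXiv:2605.29273 — 2 statements merged into one kernel-verified Lean document; each statement's English description precedes it below -/
import Mathlib

section
/- Let 0 < β₁ < 1, 0 < β₂ < 1 with δ = β₁/√β₂ < 1. Let g₁,…,g_t be real numbers, and define m_t = (1-β₁)·∑_{i=1}^t β₁^{t-i} g_i and v_t = (1-β₂)·∑_{i=1}^t β₂^{t-i} g_i². Then m_t ≤ ((1-β₁)/√(1-β₂)) · √(v_t/(1-δ²)). -/
open Finset Real

/-!
Split `β₁ = δ √β₂`, so that `β₁^(t-i) g_i = δ^(t-i) · (√β₂^(t-i) g_i)`. Cauchy–Schwarz bounds the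
square of the first moment by `∑ δ^(2(t-i))` times `∑ β₂^(t-i) g_i²`; the first factor is a
geometric sum at most `1/(1-δ²)` and the second is `v_t/(1-β₂)`.
-/

lemma sum_Icc_one_tsub_eq_sum_range {M : Type*} [AddCommMonoid M] (f : ℕ → M) (t : ℕ) :
    ∑ i ∈ Icc 1 t, f (t - i) = ∑ k ∈ range t, f k := by
  refine sum_nbij' (t - ·) (t - ·) ?_ ?_ ?_ ?_ ?_ <;> intro i hi <;>
    simp only [mem_Icc, mem_range] at hi ⊢ <;> omega

lemma sum_Icc_one_pow_tsub_le {r : ℝ} (hr₀ : 0 ≤ r) (hr₁ : r < 1) (t : ℕ) :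
    ∑ i ∈ Icc 1 t, r ^ (t - i) ≤ 1 / (1 - r) := by
  rw [sum_Icc_one_tsub_eq_sum_range (r ^ ·), ← Nat.Ico_zero_eq_range]
  simpa using geom_sum_Ico_le_of_lt_one (m := 0) (n := t) hr₀ hr₁

lemma sq_sum_pow_mul_le {a b : ℝ} (hb : 0 ≤ b) (s : Finset ℕ) (e : ℕ → ℕ) (g : ℕ → ℝ) :
    (∑ i ∈ s, (a * √b) ^ e i * g i) ^ 2 ≤
      (∑ i ∈ s, (a ^ 2) ^ e i) * ∑ i ∈ s, b ^ e i * g i ^ 2 := by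
  calc (∑ i ∈ s, (a * √b) ^ e i * g i) ^ 2 = (∑ i ∈ s, a ^ e i * (√b ^ e i * g i)) ^ 2 := by
        simp only [mul_pow, mul_assoc]
    _ ≤ (∑ i ∈ s, (a ^ e i) ^ 2) * ∑ i ∈ s, (√b ^ e i * g i) ^ 2 := sum_mul_sq_le_sq_mul_sq _ _ _
    _ = (∑ i ∈ s, (a ^ 2) ^ e i) * ∑ i ∈ s, b ^ e i * g i ^ 2 := by
        simp only [mul_pow, pow_right_comm _ _ 2, sq_sqrt hb]

lemma sq_sum_Icc_pow_mul_le_div {δ b : ℝ} (hδ₀ : 0 ≤ δ) (hδ₁ : δ < 1) (hb : 0 ≤ b)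
    (g : ℕ → ℝ) (t : ℕ) :
    (∑ i ∈ Icc 1 t, (δ * √b) ^ (t - i) * g i) ^ 2 ≤
      (∑ i ∈ Icc 1 t, b ^ (t - i) * g i ^ 2) / (1 - δ ^ 2) := by
  have hB : 0 ≤ ∑ i ∈ Icc 1 t, b ^ (t - i) * g i ^ 2 := by positivity
  calc _ ≤ (∑ i ∈ Icc 1 t, (δ ^ 2) ^ (t - i)) * ∑ i ∈ Icc 1 t, b ^ (t - i) * g i ^ 2 :=
        sq_sum_pow_mul_le hb _ _ g
    _ ≤ 1 / (1 - δ ^ 2) * ∑ i ∈ Icc 1 t, b ^ (t - i) * g i ^ 2 := by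
        gcongr
        exact sum_Icc_one_pow_tsub_le (sq_nonneg δ) (pow_lt_one₀ hδ₀ hδ₁ two_ne_zero) t
    _ = _ := one_div_mul_eq_div _ _

theorem stmt_0_general (β₁ β₂ : ℝ) (hβ₁ : 0 < β₁) (hβ₁' : β₁ < 1)
    (hβ₂ : 0 < β₂) (hβ₂' : β₂ < 1)
    (δ : ℝ) (hδ : δ = β₁ / Real.sqrt β₂) (hδ1 : δ < 1)
    (g : ℕ → ℝ) (t : ℕ)
    (m v : ℝ)
    (hm : m = (1 - β₁) * ∑ i ∈ Finset.Icc 1 t, β₁ ^ (t - i) * g i)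
    (hv : v = (1 - β₂) * ∑ i ∈ Finset.Icc 1 t, β₂ ^ (t - i) * (g i) ^ 2) :
    m ≤ ((1 - β₁) / Real.sqrt (1 - β₂)) * Real.sqrt (v / (1 - δ ^ 2)) := by
  set B := ∑ i ∈ Icc 1 t, β₂ ^ (t - i) * g i ^ 2
  have hsplit : β₁ = δ * √β₂ := by rw [hδ, div_mul_cancel₀ _ (sqrt_pos.2 hβ₂).ne']
  have hmoment : (∑ i ∈ Icc 1 t, β₁ ^ (t - i) * g i) ^ 2 ≤ B / (1 - δ ^ 2) :=
    hsplit ▸ sq_sum_Icc_pow_mul_le_div (hδ ▸ by positivity) hδ1 hβ₂.le g t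
  have hsqrt : 0 < √(1 - β₂) := sqrt_pos.2 (by linarith)
  calc m ≤ (1 - β₁) * √(B / (1 - δ ^ 2)) := hm ▸ mul_le_mul_of_nonneg_left
        ((le_abs_self _).trans (abs_le_sqrt hmoment)) (by linarith)
    _ = _ := by
        rw [hv, mul_div_assoc, sqrt_mul (by linarith)]
        field_simp

theorem stmt_0 (β₁ β₂ : ℝ) (hβ₁ : 0 < β₁) (hβ₁' : β₁ < 1)
    (hβ₂ : 0 < β₂) (hβ₂' : β₂ < 1)
    (δ : ℝ) (hδ : δ = β₁ / Real.sqrt β₂) (hδ1 : δ < 1)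
    (g : ℕ → ℝ) (t : ℕ) (ht : 1 ≤ t)
    (m v : ℝ)
    (hm : m = (1 - β₁) * ∑ i ∈ Finset.Icc 1 t, β₁ ^ (t - i) * g i)
    (hv : v = (1 - β₂) * ∑ i ∈ Finset.Icc 1 t, β₂ ^ (t - i) * (g i) ^ 2) :
    m ≤ ((1 - β₁) / Real.sqrt (1 - β₂)) * Real.sqrt (v / (1 - δ ^ 2)) :=
  stmt_0_general β₁ β₂ hβ₁ hβ₁' hβ₂ hβ₂' δ hδ hδ1 g t m v hm hv
end

section
/- Let 0 < β₂ < 1 and let g : ℕ → ℝ. Then for every T ≥ 1, ∑_{t=1}^T (1/√t) · ∑_{j=1}^t √(β₂^{t-j} · g_j²) ≤ (1/(1-√β₂)) · ∑_{t=1}^T |g_t|/√t. -/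
/-!
Since `√(β₂^(t-j) g_j²) = (√β₂)^(t-j) |g_j|` and `1/√t ≤ 1/√j` for `j ≤ t`, each weight `1/√t` can
be moved onto the index `j`. After exchanging the two sums, the coefficient of `|g_j|/√j` is
the partial geometric sum `∑_{t=j}^T (√β₂)^(t-j) ≤ 1/(1-√β₂)`.
-/

open Finset

theorem Real.sqrt_pow_mul_sq {x : ℝ} (hx : 0 ≤ x) (n : ℕ) (y : ℝ) :
    √(x ^ n * y ^ 2) = √x ^ n * |y| := by
  rw [Real.sqrt_mul (pow_nonneg hx n), Real.sqrt_sq_eq_abs,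
    ← Real.sqrt_sq (pow_nonneg (Real.sqrt_nonneg x) n), ← pow_right_comm, Real.sq_sqrt hx]

theorem sum_Icc_pow_sub_le_of_lt_one {r : ℝ} (hr0 : 0 ≤ r) (hr1 : r < 1) (j T : ℕ) :
    ∑ t ∈ Icc j T, r ^ (t - j) ≤ 1 / (1 - r) := by
  rw [← Ico_add_one_right_eq_Icc, sum_Ico_eq_sum_range]
  simp only [Nat.add_sub_cancel_left]
  simpa only [← range_eq_Ico, pow_zero] using
    geom_sum_Ico_le_of_lt_one (m := 0) (n := T + 1 - j) hr0 hr1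

theorem sum_Icc_Icc_comm {M : Type*} [AddCommMonoid M] (m T : ℕ) (f : ℕ → ℕ → M) :
    ∑ t ∈ Icc m T, ∑ j ∈ Icc m t, f t j = ∑ j ∈ Icc m T, ∑ t ∈ Icc j T, f t j := by
  simp only [← Ico_add_one_right_eq_Icc]
  exact (sum_Ico_Ico_comm m (T + 1) fun j t => f t j).symm

theorem sum_mul_sum_geom_le {r : ℝ} (hr0 : 0 ≤ r) (hr1 : r < 1) {a w : ℕ → ℝ} {m : ℕ}
    (ha : ∀ j, 0 ≤ a j) (hw0 : ∀ t, 0 ≤ w t) (hw : AntitoneOn w (Set.Ici m)) (T : ℕ) :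
    ∑ t ∈ Icc m T, w t * ∑ j ∈ Icc m t, r ^ (t - j) * a j
      ≤ 1 / (1 - r) * ∑ t ∈ Icc m T, w t * a t := by
  calc ∑ t ∈ Icc m T, w t * ∑ j ∈ Icc m t, r ^ (t - j) * a j
      ≤ ∑ t ∈ Icc m T, ∑ j ∈ Icc m t, r ^ (t - j) * (w j * a j) := by
        refine sum_le_sum fun t ht => ?_
        rw [mul_sum]
        refine sum_le_sum fun j hj => ?_
        have hj' := mem_Icc.1 hj
        have hwtj : w t ≤ w j := hw hj'.1 (hj'.1.trans hj'.2) hj'.2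
        calc w t * (r ^ (t - j) * a j) ≤ w j * (r ^ (t - j) * a j) :=
              mul_le_mul_of_nonneg_right hwtj (mul_nonneg (pow_nonneg hr0 _) (ha j))
          _ = r ^ (t - j) * (w j * a j) := by ring
    _ = ∑ j ∈ Icc m T, (∑ t ∈ Icc j T, r ^ (t - j)) * (w j * a j) := by
        simp only [sum_Icc_Icc_comm, sum_mul]
    _ ≤ ∑ j ∈ Icc m T, 1 / (1 - r) * (w j * a j) :=
        sum_le_sum fun j _ => mul_le_mul_of_nonneg_right
          (sum_Icc_pow_sub_le_of_lt_one hr0 hr1 j T) (mul_nonneg (hw0 j) (ha j))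
    _ = 1 / (1 - r) * ∑ t ∈ Icc m T, w t * a t := (mul_sum ..).symm

theorem stmt_5_general (β₂ : ℝ) (hβ₂ : 0 < β₂) (hβ₂' : β₂ < 1) (g : ℕ → ℝ)
    (T : ℕ) :
    ∑ t ∈ Finset.Icc 1 T, (1 / Real.sqrt t) *
      ∑ j ∈ Finset.Icc 1 t, Real.sqrt (β₂ ^ (t - j) * (g j) ^ 2)
    ≤ (1 / (1 - Real.sqrt β₂)) * ∑ t ∈ Finset.Icc 1 T, |g t| / Real.sqrt t := by
  have hr1 : √β₂ < 1 := (Real.sqrt_lt' one_pos).2 (by simpa using hβ₂')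
  have hw : AntitoneOn (fun t : ℕ => 1 / √(t : ℝ)) (Set.Ici 1) := fun i hi j _ hij =>
    one_div_le_one_div_of_le (Real.sqrt_pos.2 (by exact_mod_cast hi)) (by gcongr)
  simp only [Real.sqrt_pow_mul_sq hβ₂.le, div_eq_inv_mul |g _|, ← one_div]
  exact sum_mul_sum_geom_le (Real.sqrt_nonneg β₂) hr1 (fun j => abs_nonneg (g j))
    (fun t => by positivity) hw T

theorem stmt_5 (β₂ : ℝ) (hβ₂ : 0 < β₂) (hβ₂' : β₂ < 1) (g : ℕ → ℝ)
    (T : ℕ) (hT : 1 ≤ T) :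
    ∑ t ∈ Finset.Icc 1 T, (1 / Real.sqrt t) *
      ∑ j ∈ Finset.Icc 1 t, Real.sqrt (β₂ ^ (t - j) * (g j) ^ 2)
    ≤ (1 / (1 - Real.sqrt β₂)) * ∑ t ∈ Finset.Icc 1 T, |g t| / Real.sqrt t :=
  stmt_5_general β₂ hβ₂ hβ₂' g T
end
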